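/- arXiv:2001.08187 — 2 statements merged into one kernel-verified Lean document; each statement's English description precedes it below -/
import Mathlib

section
/- Let T : Fin n₁ × ⋯ × Fin n_d → ℝ be a tensor and suppose (G₁,…,G_d) is a Tensor-Train decomposition of T with ranks (r₀,…,r_d). Then for every l ∈ {1,…,d−1}, the rank of the l-matricization of T satisfies rank T^{(l)} ≤ r_l. -/
open MeasureTheory Matrix

noncomputable section

/-- Evaluation of a Tensor-Train decomposition with ranks `r 0, …, r d`:
`T(i₁,…,i_d) = G₁(i₁)⋯G_d(i_d)` written as a sum over all intermediate indices. -/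
def ttEval {d : ℕ} {n : Fin d → ℕ} (r : ℕ → ℕ)
    (G : ∀ j : Fin d, Fin (n j) → Fin (r j.1) → Fin (r (j.1 + 1)) → ℝ)
    (i : ∀ j, Fin (n j)) : ℝ :=
  ∑ α : ∀ j : Fin (d + 1), Fin (r j.1),
    ∏ j : Fin d, G j (i j) (α ⟨j.1, by omega⟩) (α ⟨j.1 + 1, by omega⟩)

/-- `(G, r)` is a Tensor-Train decomposition of the tensor `T` (with ranks `r 0 = r d = 1`). -/
def IsTTRep {d : ℕ} {n : Fin d → ℕ} (T : (∀ j, Fin (n j)) → ℝ) (r : ℕ → ℕ)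
    (G : ∀ j : Fin d, Fin (n j) → Fin (r j.1) → Fin (r (j.1 + 1)) → ℝ) : Prop :=
  r 0 = 1 ∧ r d = 1 ∧ ∀ i, T i = ttEval r G i

/-- The `l`-matricization of a tensor: rows are indexed by the first `l` indices,
columns by the remaining ones. -/
def matricize {d : ℕ} {n : Fin d → ℕ} (T : (∀ j, Fin (n j)) → ℝ) (l : ℕ) :
    Matrix (∀ j : {j : Fin d // j.1 < l}, Fin (n j.1))
      (∀ j : {j : Fin d // ¬ j.1 < l}, Fin (n j.1)) ℝ :=
  fun x y => T fun j => if h : j.1 < l then x ⟨j, h⟩ else y ⟨j, h⟩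

/-- Evaluation of a functional Tensor-Train (FTT) decomposition with cores `γ`. -/
def fttEval {d : ℕ} (r : ℕ → ℕ)
    (γ : ∀ j : Fin d, Fin (r j.1) → ℝ → Fin (r (j.1 + 1)) → ℝ)
    (x : Fin d → ℝ) : ℝ :=
  ∑ α : ∀ j : Fin (d + 1), Fin (r j.1),
    ∏ j : Fin d, γ j (α ⟨j.1, by omega⟩) (x j) (α ⟨j.1 + 1, by omega⟩)

/-- `f` has an FTT representation (almost everywhere) with measurable cores `γ`
and ranks `r 0 = 1, r 1, …, r (d-1), r d = 1`. -/
def IsFTTRepAE {d : ℕ} (f : (Fin d → ℝ) → ℝ) (r : ℕ → ℕ)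
    (γ : ∀ j : Fin d, Fin (r j.1) → ℝ → Fin (r (j.1 + 1)) → ℝ) : Prop :=
  r 0 = 1 ∧ r d = 1 ∧ (∀ j a b, Measurable fun t => γ j a t b) ∧
    ∀ᵐ x : Fin d → ℝ, f x = fttEval r γ x

/-- The first `k` coordinates of `x : ℝ^d` (as an element of `ℝ^k`). -/
def firstCoords (d k : ℕ) (x : Fin d → ℝ) : Fin k → ℝ :=
  fun i => if h : i.1 < d then x ⟨i.1, h⟩ else 0

/-- The last `d - k` coordinates of `x : ℝ^d` (as an element of `ℝ^(d-k)`). -/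
def lastCoords (d k : ℕ) (x : Fin d → ℝ) : Fin (d - k) → ℝ :=
  fun i => x ⟨k + i.1, by omega⟩

/-- `g : ℝ^d → ℝ` has `k`-separation rank at most `R`. -/
def HasSepRankLE {d : ℕ} (g : (Fin d → ℝ) → ℝ) (k R : ℕ) : Prop :=
  ∃ (u : Fin R → (Fin k → ℝ) → ℝ) (v : Fin R → (Fin (d - k) → ℝ) → ℝ),
    (∀ j, MemLp (u j) 2 volume) ∧ (∀ j, MemLp (v j) 2 volume) ∧
    ∀ᵐ x : Fin d → ℝ, g x = ∑ j, u j (firstCoords d k x) * v j (lastCoords d k x)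

/-- The unnormalized Gaussian density `f_Γ(x) = exp(-½ xᵀ Γ x)`. -/
def gaussDensity {d : ℕ} (Γ : Matrix (Fin d) (Fin d) ℝ) (x : Fin d → ℝ) : ℝ :=
  Real.exp (-(1 / 2) * (x ⬝ᵥ Γ.mulVec x))

/-- The cube `[-a, a]^d ⊆ ℝ^d`. -/
def cube (d : ℕ) (a : ℝ) : Set (Fin d → ℝ) := Set.univ.pi fun _ => Set.Icc (-a) a

/-- The `k`-th subdiagonal block `A_k = (Γ_{ij})_{k+1 ≤ i ≤ d, 1 ≤ j ≤ k}` of a `d × d` matrix. -/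
def subdiagBlock {d : ℕ} (Γ : Matrix (Fin d) (Fin d) ℝ) (k : ℕ) :
    Matrix (Fin (d - k)) (Fin k) ℝ :=
  fun i j => if h : j.1 < d then Γ ⟨k + i.1, by omega⟩ ⟨j.1, h⟩ else 0

/-- The singular values of a real matrix (in unspecified order):
square roots of the eigenvalues of `Aᵀ * A`. -/
def singularValues {m k : ℕ} (A : Matrix (Fin m) (Fin k) ℝ) : Fin k → ℝ :=
  fun i => Real.sqrt ((Matrix.isHermitian_conjTranspose_mul_self A).eigenvalues i)

end
/-! Cutting the train at the bond `l`, each term of the contraction `ttEval` is the product of a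
factor that depends on the row indices and the bond indices `α₀, …, α_l` and a factor that depends
on the column indices and `α_l, …, α_d`. Summing out every bond index except `α_l` writes the
`l`-matricization as a product of a matrix with `r l` columns and a matrix with `r l` rows. -/

theorem Matrix.rank_le_card_of_eq_sum_mul_of_factorsThrough {m n ι κ R : Type*}
    [Fintype n] [Fintype ι] [Fintype κ] [CommSemiring R] [StrongRankCondition R]
    (M : Matrix m n R) (f : m → ι → R) (g : ι → n → R) (π : ι → κ)
    (hg : g.FactorsThrough π) (hM : ∀ x y, M x y = ∑ a, f x a * g a y) :
    M.rank ≤ Fintype.card κ := by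
  classical
  have hM' : M = (of fun x k => ∑ a : {a // π a = k}, f x a) * of (Function.extend π g 0) := by
    ext x y
    rw [hM, mul_apply, ← Fintype.sum_fiberwise π]
    refine Fintype.sum_congr _ _ fun k => ?_
    simp only [of_apply, Finset.sum_mul]
    refine Fintype.sum_congr _ _ fun ⟨a, ha⟩ => ?_
    simp only [← ha, hg.extend_apply]
  exact hM' ▸ (rank_mul_le_left _ _).trans (rank_le_card_width _)

theorem Matrix.rank_le_card_of_eq_sum_pi {m n K R : Type*} {β : K → Type*}
    [Fintype n] [Fintype K] [DecidableEq K] [∀ k, Fintype (β k)]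
    [CommSemiring R] [StrongRankCondition R] (p q : K → Prop) [DecidablePred p] {l : K}
    (hl : p l) (hpq : ∀ k, p k → q k → k = l) (M : Matrix m n R)
    (f : m → (∀ k : {k // p k}, β k) → R) (g : (∀ k : {k // q k}, β k) → n → R)
    (hM : ∀ x y, M x y = ∑ α : ∀ k, β k, f x (fun k => α k) * g (fun k => α k) y) :
    M.rank ≤ Fintype.card (β l) := by
  let e := (Equiv.piEquivPiSubtypeProd p β).symm
  -- Summing out the coordinates outside `p` leaves a right factor that sees `a` only through `a l`.
  refine M.rank_le_card_of_eq_sum_mul_of_factorsThrough f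
    (fun a y => ∑ c, g (fun k => e (a, c) k) y) (fun a => a ⟨l, hl⟩) ?_ fun x y => ?_
  · intro a a' h
    ext y
    refine Fintype.sum_congr _ _ fun c => congrArg₂ g (funext fun ⟨k, hk⟩ => ?_) rfl
    by_cases hpk : p k
    · obtain rfl := hpq k hpk hk
      simpa only [e, Equiv.piEquivPiSubtypeProd_symm_apply, hl, ↓reduceDIte] using h
    · simp only [e, Equiv.piEquivPiSubtypeProd_symm_apply, hpk, ↓reduceDIte]
  · rw [hM, ← e.sum_comp, Fintype.sum_prod_type]
    refine Fintype.sum_congr _ _ fun a => ?_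
    rw [Finset.mul_sum]
    refine Fintype.sum_congr _ _ fun c => ?_
    congr 2
    ext k
    simp only [e, Equiv.piEquivPiSubtypeProd_symm_apply, k.2, ↓reduceDIte]

theorem rank_matricize_ttEval_le {d : ℕ} {n : Fin d → ℕ} (r : ℕ → ℕ)
    (G : ∀ j : Fin d, Fin (n j) → Fin (r j.1) → Fin (r (j.1 + 1)) → ℝ) {l : ℕ} (hl : l ≤ d) :
    (matricize (ttEval r G) l).rank ≤ r l := by
  refine (rank_le_card_of_eq_sum_pi (β := fun k : Fin (d + 1) => Fin (r k))
    (fun k => k.1 ≤ l) (fun k => l ≤ k.1) (l := ⟨l, by omega⟩) le_rfl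
    (fun k hk hk' => Fin.ext (le_antisymm hk hk')) (matricize (ttEval r G) l)
    (fun x a => ∏ j : {j : Fin d // j.1 < l},
      G j (x j) (a ⟨⟨j.1, by omega⟩, j.2.le⟩) (a ⟨⟨j.1 + 1, by omega⟩, j.2⟩))
    (fun c y => ∏ j : {j : Fin d // ¬ j.1 < l},
      G j (y j) (c ⟨⟨j.1, by omega⟩, not_lt.1 j.2⟩) (c ⟨⟨j.1 + 1, by omega⟩, (not_lt.1 j.2).step⟩))
    fun x y => ?_).trans_eq (Fintype.card_fin _)
  refine Fintype.sum_congr _ _ fun α => ?_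
  rw [← Fintype.prod_subtype_mul_prod_subtype (fun j : Fin d => j.1 < l)]
  congr 1 <;> refine Fintype.prod_congr _ _ fun j => ?_ <;> simp only [j.2, ↓reduceDIte]

/-- If `(G, r)` is a Tensor-Train decomposition of `T`, then for every
`l ∈ {1,…,d−1}` the rank of the `l`-matricization of `T` is at most `r l`. -/
theorem tt_rank_lower_bound {d : ℕ} {n : Fin d → ℕ} (T : (∀ j, Fin (n j)) → ℝ)
    (r : ℕ → ℕ) (G : ∀ j : Fin d, Fin (n j) → Fin (r j.1) → Fin (r (j.1 + 1)) → ℝ)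
    (hTT : IsTTRep T r G) :
    ∀ l : ℕ, 1 ≤ l → l ≤ d - 1 → (matricize T l).rank ≤ r l := by
  intro l _ hl
  obtain ⟨-, -, hT⟩ := hTT
  rw [show T = ttEval r G from funext hT]
  exact rank_matricize_ttEval_le r G (by omega)
end

section
/- Let a > 0, d ≥ 2, Ω = [−a,a]^d, k ∈ {1,…,d−1}, l ≤ min(k, d−k), and σ₁,…,σ_l ≥ 0. Define f_j(x) = exp(−σ_j·x_j·x_{k+j}) for j = 1,…,l. Let p₁,…,p_l : ℝ^d → ℝ be bounded measurable functions, let δ_j := sup_{x ∈ Ω} |f_j(x) − p_j(x)| and set ε_j := δ_j·exp(σ_j·a²). Let f₀ : ℝ^d → ℝ be measurable with f₀·f₁⋯f_l ∈ L²(Ω). Then for every i ∈ {1,…,l}: ‖f₀·p₁⋯p_{i−1}·f_{i+1}⋯f_l‖_{L²(Ω)} ≤ (∏_{j=1}^{i−1} (1 + ε_j)) · exp(σ_i·a²) · ‖f₀·f₁⋯f_l‖_{L²(Ω)}. -/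
open MeasureTheory Matrix

/-! On the cube each factor `f_j` lies between `exp (-σ_j a²)` and `exp (σ_j a²)`. The lower
bound turns the absolute error `δ_j` into a relative one, `|p_j| ≤ (1 + ε_j) f_j`, and also gives
`1 ≤ exp (σ_i a²) f_i`, which lets the missing `i`-th factor be put back. This yields a pointwise
bound of the integrand by a constant multiple of `f₀ f₁ ⋯ f_l`, hence the `L²` bound. -/

open Finset Real

theorem prod_univ_eq_prod_lt_mul_mul_prod_gt {ι M : Type*} [Fintype ι] [LinearOrder ι]
    [CommMonoid M] (F : ι → M) (i : ι) :
    ∏ j, F j = (∏ j ∈ univ.filter (· < i), F j) * (F i * ∏ j ∈ univ.filter (i < ·), F j) := by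
  have hge : univ.filter (fun j => ¬ j < i) = insert i (univ.filter (i < ·)) := by
    ext j; simp [le_iff_eq_or_lt, eq_comm]
  rw [← prod_filter_mul_prod_filter_not univ (· < i), hge, prod_insert (by simp)]

theorem abs_prod_lt_mul_prod_gt_le {ι : Type*} [Fintype ι] [LinearOrder ι] (i : ι)
    (P F c : ι → ℝ) (e : ℝ) (hF : ∀ j, 0 ≤ F j) (hP : ∀ j < i, |P j| ≤ c j * F j)
    (hi : 1 ≤ e * F i) :
    |(∏ j ∈ univ.filter (· < i), P j) * ∏ j ∈ univ.filter (i < ·), F j| ≤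
      (∏ j ∈ univ.filter (· < i), c j) * e * ∏ j, F j := by
  have hPc : ∏ j ∈ univ.filter (· < i), |P j| ≤ ∏ j ∈ univ.filter (· < i), c j * F j :=
    prod_le_prod (fun j _ => abs_nonneg _) fun j hj => hP j (mem_filter.1 hj).2
  have hQ : 0 ≤ ∏ j ∈ univ.filter (i < ·), F j := prod_nonneg fun j _ => hF j
  have hPc0 : 0 ≤ ∏ j ∈ univ.filter (· < i), c j * F j :=
    (prod_nonneg fun _ _ => abs_nonneg _).trans hPc
  calc |(∏ j ∈ univ.filter (· < i), P j) * ∏ j ∈ univ.filter (i < ·), F j|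
      = (∏ j ∈ univ.filter (· < i), |P j|) * ∏ j ∈ univ.filter (i < ·), F j := by
        rw [abs_mul, abs_prod, abs_of_nonneg hQ]
    _ ≤ (∏ j ∈ univ.filter (· < i), c j * F j) * ∏ j ∈ univ.filter (i < ·), F j :=
        mul_le_mul_of_nonneg_right hPc hQ
    _ ≤ (∏ j ∈ univ.filter (· < i), c j * F j) * (∏ j ∈ univ.filter (i < ·), F j) * (e * F i) :=
        le_mul_of_one_le_right (mul_nonneg hPc0 hQ) hi
    _ = (∏ j ∈ univ.filter (· < i), c j) * e * ∏ j, F j := by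
        rw [prod_univ_eq_prod_lt_mul_mul_prod_gt F i, prod_mul_distrib]; ring

theorem one_le_exp_mul_of_exp_neg_le {F c : ℝ} (hF : exp (-c) ≤ F) : 1 ≤ exp c * F :=
  calc 1 = exp c * exp (-c) := by rw [← exp_add, add_neg_cancel, exp_zero]
    _ ≤ exp c * F := by gcongr

theorem abs_le_one_add_mul_exp_mul {F P δ c : ℝ} (hδ : 0 ≤ δ) (hF : exp (-c) ≤ F)
    (hFP : |F - P| ≤ δ) : |P| ≤ (1 + δ * exp c) * F := by
  have hδF : δ ≤ δ * (exp c * F) := le_mul_of_one_le_right hδ (one_le_exp_mul_of_exp_neg_le hF)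
  have hF0 : 0 ≤ F := (exp_pos _).le.trans hF
  calc |P| ≤ |F| + |F - P| := by linarith [abs_sub_abs_le_abs_sub P F, abs_sub_comm P F]
    _ ≤ F + δ * (exp c * F) := by rw [abs_of_nonneg hF0]; linarith
    _ = (1 + δ * exp c) * F := by ring

theorem exp_neg_mul_mul_mem_Icc {σ a s t : ℝ} (hσ : 0 ≤ σ) (hs : |s| ≤ a) (ht : |t| ≤ a) :
    exp (-σ * s * t) ∈ Set.Icc (exp (-(σ * a ^ 2))) (exp (σ * a ^ 2)) := by
  have hst : |s * t| ≤ a ^ 2 := by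
    rw [abs_mul, sq]; exact mul_le_mul hs ht (abs_nonneg _) ((abs_nonneg _).trans hs)
  have : |-σ * s * t| ≤ σ * a ^ 2 := by
    rw [mul_assoc, abs_mul, abs_neg, abs_of_nonneg hσ]; exact mul_le_mul_of_nonneg_left hst hσ
  exact ⟨exp_le_exp.2 (neg_le_of_abs_le this), exp_le_exp.2 (le_of_abs_le this)⟩

theorem abs_le_of_mem_cube {d : ℕ} {a : ℝ} {x : Fin d → ℝ} (hx : x ∈ cube d a) (m : Fin d) :
    |x m| ≤ a :=
  abs_le.2 (hx m (Set.mem_univ m))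

theorem zero_mem_cube (d : ℕ) {a : ℝ} (ha : 0 ≤ a) : (0 : Fin d → ℝ) ∈ cube d a :=
  fun _ _ => ⟨neg_nonpos.2 ha, ha⟩

theorem measurableSet_cube (d : ℕ) (a : ℝ) : MeasurableSet (cube d a) :=
  MeasurableSet.univ_pi fun _ => measurableSet_Icc

/-- Stability of the partially interpolated product: replacing the
first `i−1` exponential factors by their interpolants and dropping the `i`-th factor
changes the `L²(Ω)` norm by at most `(∏_{j<i} (1+ε_j)) e^{σ_i a²}`. -/
theorem partial_product_stability {d : ℕ} (a : ℝ) (ha : 0 < a)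
    (k : ℕ) (l : ℕ) (hl : l ≤ min k (d - k))
    (σs : Fin l → ℝ) (hσs : ∀ j, 0 ≤ σs j)
    (f : Fin l → (Fin d → ℝ) → ℝ)
    (hf : ∀ (j : Fin l) (x : Fin d → ℝ),
      f j x = Real.exp (-σs j * x ⟨j.1, by omega⟩ * x ⟨k + j.1, by omega⟩))
    (p : Fin l → (Fin d → ℝ) → ℝ)
    (hpbdd : ∀ j, ∃ M, ∀ x, |p j x| ≤ M)
    (δ : Fin l → ℝ) (hδ : ∀ j, δ j = ⨆ x : cube d a, |f j x.1 - p j x.1|)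
    (f0 : (Fin d → ℝ) → ℝ) :
    ∀ i : Fin l,
      eLpNorm (fun x => f0 x * (∏ j ∈ Finset.univ.filter (fun j => j < i), p j x) *
            (∏ j ∈ Finset.univ.filter (fun j => i < j), f j x)) 2
          (volume.restrict (cube d a)) ≤
        ENNReal.ofReal
            ((∏ j ∈ Finset.univ.filter (fun j => j < i),
              (1 + δ j * Real.exp (σs j * a ^ 2))) * Real.exp (σs i * a ^ 2)) *
          eLpNorm (fun x => f0 x * ∏ j, f j x) 2 (volume.restrict (cube d a)) := by
  intro i
  have hf_mem (j : Fin l) (x) (hx : x ∈ cube d a) :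
      f j x ∈ Set.Icc (exp (-(σs j * a ^ 2))) (exp (σs j * a ^ 2)) := by
    rw [hf]
    exact exp_neg_mul_mul_mem_Icc (hσs j) (abs_le_of_mem_cube hx _) (abs_le_of_mem_cube hx _)
  have hf_pos (j : Fin l) (x) : 0 < f j x := by rw [hf]; exact exp_pos _
  have hδ_le (j : Fin l) (x) (hx : x ∈ cube d a) : |f j x - p j x| ≤ δ j := by
    obtain ⟨M, hM⟩ := hpbdd j
    rw [hδ]
    refine le_ciSup (f := fun y : cube d a => |f j y - p j y|)
      ⟨exp (σs j * a ^ 2) + M, ?_⟩ ⟨x, hx⟩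
    rintro _ ⟨y, rfl⟩
    calc |f j y - p j y| ≤ |f j y| + |p j y| := abs_sub _ _
      _ ≤ exp (σs j * a ^ 2) + M := by
        rw [abs_of_pos (hf_pos j y)]; exact add_le_add (hf_mem j y y.2).2 (hM y)
  have hδ_nonneg (j : Fin l) : 0 ≤ δ j :=
    (abs_nonneg _).trans (hδ_le j 0 (zero_mem_cube d ha.le))
  refine eLpNorm_le_mul_eLpNorm_of_ae_le_mul
    ((ae_restrict_iff' (measurableSet_cube d a)).2 (.of_forall fun x hx => ?_)) 2
  have hprod := abs_prod_lt_mul_prod_gt_le i (fun j => p j x) (fun j => f j x) _ _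
    (fun j => (hf_pos j x).le)
    (fun j _ => abs_le_one_add_mul_exp_mul (hδ_nonneg j) (hf_mem j x hx).1 (hδ_le j x hx))
    (one_le_exp_mul_of_exp_neg_le (hf_mem i x hx).1)
  simp only [Real.norm_eq_abs]
  calc _ = |f0 x| * |(∏ j ∈ univ.filter (· < i), p j x) * ∏ j ∈ univ.filter (i < ·), f j x| := by
        rw [mul_assoc, abs_mul]
    _ ≤ |f0 x| * (_ * ∏ j, f j x) := mul_le_mul_of_nonneg_left hprod (abs_nonneg _)
    _ = _ := by rw [abs_mul, abs_of_pos (prod_pos fun j _ => hf_pos j x)]; ring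
end
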